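/- The Konno function f is a probability density on ℝ: f(x) ≥ 0 for all x ∈ ℝ, and ∫_ℝ f(x) dx = ∫_{−1/√2}^{1/√2} 1/(π(1−x²)√(1−2x²)) dx = 1. -/

import Mathlib

/-!
On `|x| < 1/√2` the density is the derivative of `arcsin (x / √(1 - x²)) / π`. This primitive is
continuous on the closed interval and equals `±1/2` at its endpoints, where `x / √(1 - x²) = ±1`;
since the density is nonnegative it is automatically integrable, and the fundamental theorem of
calculus gives total mass `1/2 - (-1/2) = 1`.
-/

open Real MeasureTheory Set intervalIntegral

noncomputable section

def konno (x : ℝ) : ℝ :=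
  if |x| < 1 / Real.sqrt 2 then 1 / (Real.pi * (1 - x ^ 2) * Real.sqrt (1 - 2 * x ^ 2)) else 0

def konnoKernel (x : ℝ) : ℝ := 1 / (π * (1 - x ^ 2) * √(1 - 2 * x ^ 2))

def konnoAntideriv (x : ℝ) : ℝ := arcsin (x / √(1 - x ^ 2)) / π

lemma konno_eq_indicator : konno = (Ioo (-(1 / √2)) (1 / √2)).indicator konnoKernel := by
  ext x
  simp only [konno, indicator, mem_Ioo, abs_lt, konnoKernel]

lemma konnoKernel_nonneg {x : ℝ} (hx : x ^ 2 ≤ 1) : 0 ≤ konnoKernel x :=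
  one_div_nonneg.mpr <| mul_nonneg (mul_nonneg pi_pos.le (sub_nonneg.mpr hx)) (sqrt_nonneg _)

lemma one_div_sqrt_two_sq : (1 / √2) ^ 2 = 1 / 2 := by
  rw [div_pow, sq_sqrt zero_le_two, one_pow]

lemma two_mul_sq_lt_one_of_mem_Ioo {x : ℝ} (hx : x ∈ Ioo (-(1 / √2)) (1 / √2)) :
    2 * x ^ 2 < 1 := by
  have := sq_lt_sq' hx.1 hx.2
  rw [one_div_sqrt_two_sq] at this
  linarith

lemma konno_nonneg (x : ℝ) : 0 ≤ konno x := by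
  rw [konno_eq_indicator]
  exact indicator_nonneg
    (fun y hy => konnoKernel_nonneg (by nlinarith [two_mul_sq_lt_one_of_mem_Ioo hy])) x

lemma hasDerivAt_arcsin_div_sqrt_one_sub_sq {x : ℝ} (hx : 2 * x ^ 2 < 1) :
    HasDerivAt (fun y => arcsin (y / √(1 - y ^ 2))) (1 / ((1 - x ^ 2) * √(1 - 2 * x ^ 2))) x := by
  have h1 : 0 < 1 - x ^ 2 := by nlinarith
  set s := √(1 - x ^ 2) with hs
  have hs0 : 0 < s := sqrt_pos.mpr h1
  have hs2 : s ^ 2 = 1 - x ^ 2 := sq_sqrt h1.le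
  have hquot : HasDerivAt (fun y => y / √(1 - y ^ 2)) (1 / s ^ 3) x := by
    refine ((hasDerivAt_id' x).div (((hasDerivAt_pow 2 x).const_sub 1).sqrt h1.ne')
      hs0.ne').congr_deriv ?_
    field_simp
    rw [← hs]
    norm_num
    linear_combination 2 * s ^ 3 * hs2
  have hu : 1 - (x / s) ^ 2 = (1 - 2 * x ^ 2) / s ^ 2 := by
    field_simp
    rw [hs2]
    ring
  have hlt : (x / s) ^ 2 < 1 := by
    rw [div_pow, hs2, div_lt_one h1]
    linarith
  refine ((hasDerivAt_arcsin (by nlinarith) (by nlinarith)).comp x hquot).congr_deriv ?_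
  rw [hu, sqrt_div' _ (sq_nonneg s), sqrt_sq hs0.le, ← hs2]
  field_simp

lemma hasDerivAt_konnoAntideriv {x : ℝ} (hx : 2 * x ^ 2 < 1) :
    HasDerivAt konnoAntideriv (konnoKernel x) x :=
  ((hasDerivAt_arcsin_div_sqrt_one_sub_sq hx).div_const π).congr_deriv <| by
    rw [konnoKernel, div_div, mul_comm, ← mul_assoc]

lemma continuousOn_konnoAntideriv : ContinuousOn konnoAntideriv (Icc (-(1 / √2)) (1 / √2)) := by
  refine (continuous_arcsin.comp_continuousOn ?_).div_const π
  refine continuousOn_id.div (by fun_prop) fun y hy => ?_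
  have := sq_le_sq' hy.1 hy.2
  rw [one_div_sqrt_two_sq] at this
  exact (sqrt_pos.mpr (by linarith)).ne'

lemma konnoAntideriv_one_div_sqrt_two : konnoAntideriv (1 / √2) = 1 / 2 := by
  have hone : 1 / √2 / √(1 - (1 / √2) ^ 2) = 1 := by
    rw [div_pow, sq_sqrt zero_le_two]
    norm_num
  rw [konnoAntideriv, hone, arcsin_one]
  field_simp

lemma konnoAntideriv_neg (x : ℝ) : konnoAntideriv (-x) = -konnoAntideriv x := by
  simp only [konnoAntideriv, neg_sq, neg_div, arcsin_neg]

lemma integral_konnoKernel : ∫ x in -(1 / √2)..1 / √2, konnoKernel x = 1 := by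
  have hc : 0 < 1 / √2 := by positivity
  have hderiv : ∀ x ∈ Ioo (-(1 / √2)) (1 / √2), HasDerivAt konnoAntideriv (konnoKernel x) x :=
    fun x hx => hasDerivAt_konnoAntideriv (two_mul_sq_lt_one_of_mem_Ioo hx)
  have hpos : ∀ x ∈ Ioo (-(1 / √2)) (1 / √2), 0 ≤ konnoKernel x :=
    fun x hx => konnoKernel_nonneg (by nlinarith [two_mul_sq_lt_one_of_mem_Ioo hx])
  have hint : IntervalIntegrable konnoKernel volume (-(1 / √2)) (1 / √2) :=
    (intervalIntegrable_iff_integrableOn_Ioc_of_le (by linarith)).mpr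
      (integrableOn_deriv_of_nonneg continuousOn_konnoAntideriv hderiv hpos)
  rw [integral_eq_sub_of_hasDerivAt_of_le (by linarith) continuousOn_konnoAntideriv hderiv hint,
    konnoAntideriv_neg, konnoAntideriv_one_div_sqrt_two]
  norm_num

/-- **The Konno function is a probability density on ℝ**: it is nonnegative, its integral
over `ℝ` equals `∫_{−1/√2}^{1/√2} 1/(π(1−x²)√(1−2x²)) dx`, and this common value is `1`. -/
theorem konno_probability_density :
    (∀ x : ℝ, 0 ≤ konno x) ∧
    (∫ x : ℝ, konno x) =
      (∫ x in (-(1 / Real.sqrt 2))..(1 / Real.sqrt 2),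
        1 / (Real.pi * (1 - x ^ 2) * Real.sqrt (1 - 2 * x ^ 2))) ∧
    (∫ x : ℝ, konno x) = 1 := by
  have hint : ∫ x, konno x = ∫ x in -(1 / √2)..1 / √2, konnoKernel x := by
    rw [konno_eq_indicator, MeasureTheory.integral_indicator measurableSet_Ioo,
      integral_of_le (neg_le_self (by positivity)), integral_Ioc_eq_integral_Ioo]
  exact ⟨konno_nonneg, hint, hint.trans integral_konnoKernel⟩

end
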